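/- arXiv:2001.11901 — 2 statements merged into one kernel-verified Lean document; each statement's English description precedes it below -/
import Mathlib

section
/- Let V ∈ B^q(ℝ^n) be a reverse Hölder weight with exponent q ≥ 1 and constant ⟦V⟧_q. Suppose Q and Q̃ are cubes with Q̃ ⊆ Q, such that l(Q)^2 ⨍_Q V ≤ 1 and l(Q̃)^2 ⨍_{Q̃} V > 1. If q > n/2, then l(Q) < ⟦V⟧_q^{1/(2 - n/q)} · l(Q̃). -/
/-!
Jensen's inequality, the containment `Q̃ ⊆ Q` and the reverse Hölder inequality on `Q` give
`⨍_{Q̃} V ≤ (⨍_{Q̃} V^q)^{1/q} ≤ (l(Q)/l(Q̃))^{n/q} (⨍_Q V^q)^{1/q} ≤ K (l(Q)/l(Q̃))^{n/q} ⨍_Q V`.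
Inserting this into `l(Q)² ⨍_Q V ≤ 1 < l(Q̃)² ⨍_{Q̃} V` yields `(l(Q)/l(Q̃))^{2 - n/q} < K`,
and `2 - n/q > 0` because `q > n/2`.
-/

open MeasureTheory

/-- The (axis-parallel, half-open) cube in `ℝ^n` with lower corner `c` and side-length `l`. -/
def cube (n : ℕ) (c : Fin n → ℝ) (l : ℝ) : Set (Fin n → ℝ) :=
  {x | ∀ i, c i ≤ x i ∧ x i < c i + l}

section SetAverage

variable {α : Type*} [MeasurableSpace α] {μ : Measure α} {f : α → ℝ} {s t : Set α}

theorem setAverage_nonneg_of_ae (hf : ∀ᵐ x ∂μ.restrict s, 0 ≤ f x) : 0 ≤ ⨍ x in s, f x ∂μ := by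
  rw [setAverage_eq]
  exact smul_nonneg (by positivity) (integral_nonneg_of_ae hf)

theorem setAverage_le_measureReal_div_mul_setAverage (hst : s ⊆ t) (ht : μ t ≠ ⊤)
    (hf : ∀ᵐ x ∂μ.restrict t, 0 ≤ f x) (hfi : IntegrableOn f t μ) :
    ⨍ x in s, f x ∂μ ≤ (μ.real t / μ.real s) * ⨍ x in t, f x ∂μ := by
  rcases (measureReal_nonneg : 0 ≤ μ.real s).eq_or_lt with hs | hs
  · simp [setAverage_eq, ← hs]
  have hts : μ.real s ≤ μ.real t := measureReal_mono hst ht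
  have hratio : μ.real t / μ.real s * (μ.real t)⁻¹ = (μ.real s)⁻¹ := by
    field_simp [(hs.trans_le hts).ne']
  rw [setAverage_eq, setAverage_eq, smul_eq_mul, smul_eq_mul, ← mul_assoc, hratio]
  exact mul_le_mul_of_nonneg_left (setIntegral_mono_set hfi hf hst.eventuallyLE) (by positivity)

theorem setAverage_le_rpow_setAverage_rpow {q : ℝ} (hq : 1 ≤ q) (hs0 : μ s ≠ 0) (hs : μ s ≠ ⊤)
    (hf : ∀ᵐ x ∂μ.restrict s, 0 ≤ f x) (hfi : IntegrableOn f s μ)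
    (hfqi : IntegrableOn (fun x => f x ^ q) s μ) :
    ⨍ x in s, f x ∂μ ≤ (⨍ x in s, f x ^ q ∂μ) ^ (1 / q) := by
  have hjensen : (⨍ x in s, f x ∂μ) ^ q ≤ ⨍ x in s, f x ^ q ∂μ :=
    (convexOn_rpow hq).map_set_average_le (Real.continuous_rpow_const (by linarith)).continuousOn
      isClosed_Ici hs0 hs hf hfi hfqi
  have havg : 0 ≤ ⨍ x in s, f x ∂μ := setAverage_nonneg_of_ae hf
  calc ⨍ x in s, f x ∂μ = ((⨍ x in s, f x ∂μ) ^ q) ^ (1 / q) := by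
        rw [← Real.rpow_mul havg, mul_one_div_cancel (by positivity), Real.rpow_one]
    _ ≤ _ := by gcongr

theorem setAverage_le_measureReal_div_rpow_mul_setAverage_rpow {q : ℝ} (hq : 1 ≤ q)
    (hst : s ⊆ t) (hs0 : μ s ≠ 0) (ht : μ t ≠ ⊤) (hf : ∀ᵐ x ∂μ.restrict t, 0 ≤ f x)
    (hfi : IntegrableOn f s μ) (hfqi : IntegrableOn (fun x => f x ^ q) t μ) :
    ⨍ x in s, f x ∂μ ≤
      (μ.real t / μ.real s) ^ (1 / q) * (⨍ x in t, f x ^ q ∂μ) ^ (1 / q) := by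
  have hfq : ∀ᵐ x ∂μ.restrict t, 0 ≤ f x ^ q := hf.mono fun x hx => Real.rpow_nonneg hx q
  calc ⨍ x in s, f x ∂μ ≤ (⨍ x in s, f x ^ q ∂μ) ^ (1 / q) :=
        setAverage_le_rpow_setAverage_rpow hq hs0 (ne_top_of_le_ne_top ht (measure_mono hst))
          (ae_restrict_of_ae_restrict_of_subset hst hf) hfi (hfqi.mono_set hst)
    _ ≤ ((μ.real t / μ.real s) * ⨍ x in t, f x ^ q ∂μ) ^ (1 / q) :=
        Real.rpow_le_rpow (setAverage_nonneg_of_ae (ae_restrict_of_ae_restrict_of_subset hst hfq))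
          (setAverage_le_measureReal_div_mul_setAverage hst ht hfq hfqi) (by positivity)
    _ = _ := Real.mul_rpow (by positivity) (setAverage_nonneg_of_ae hfq)

end SetAverage

theorem cube_eq_pi (n : ℕ) (c : Fin n → ℝ) (l : ℝ) :
    cube n c l = Set.univ.pi fun i => Set.Ico (c i) (c i + l) := by
  ext x
  simp [cube, Set.mem_pi]

theorem volume_cube (n : ℕ) (c : Fin n → ℝ) {l : ℝ} (hl : 0 ≤ l) :
    volume (cube n c l) = ENNReal.ofReal (l ^ n) := by
  rw [cube_eq_pi, volume_pi_pi]
  simp [Real.volume_Ico, ← ENNReal.ofReal_pow hl]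

theorem measureReal_cube (n : ℕ) (c : Fin n → ℝ) {l : ℝ} (hl : 0 ≤ l) :
    volume.real (cube n c l) = l ^ n := by
  rw [measureReal_def, volume_cube n c hl, ENNReal.toReal_ofReal (by positivity)]

theorem setAverage_cube_le_rpow_mul_setAverage_rpow {n : ℕ} {q : ℝ} (hq : 1 ≤ q)
    {f : (Fin n → ℝ) → ℝ} {c c' : Fin n → ℝ} {l l' : ℝ} (hl : 0 < l) (hl' : 0 < l')
    (hsub : cube n c' l' ⊆ cube n c l) (hf : ∀ x, 0 ≤ f x)
    (hfi : IntegrableOn f (cube n c' l')) (hfqi : IntegrableOn (fun x => f x ^ q) (cube n c l)) :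
    ⨍ x in cube n c' l', f x ≤
      (l / l') ^ ((n : ℝ) / q) * (⨍ x in cube n c l, f x ^ q) ^ (1 / q) := by
  have hratio : (volume.real (cube n c l) / volume.real (cube n c' l')) ^ (1 / q)
      = (l / l') ^ ((n : ℝ) / q) := by
    rw [measureReal_cube n c hl.le, measureReal_cube n c' hl'.le, ← div_pow,
      ← Real.rpow_natCast, ← Real.rpow_mul (div_pos hl hl').le, mul_one_div]
  rw [← hratio]
  refine setAverage_le_measureReal_div_rpow_mul_setAverage_rpow hq hsub ?_ ?_
    (ae_of_all _ hf) hfi hfqi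
  · rw [volume_cube n c' hl'.le]; positivity
  · rw [volume_cube n c hl.le]; exact ENNReal.ofReal_ne_top

theorem lt_rpow_one_div_of_sq_lt_rpow_mul {r K p : ℝ} (hr : 0 < r) (hp : p < 2)
    (h : r ^ 2 < r ^ p * K) : r < K ^ (1 / (2 - p)) := by
  have hsub : r ^ (2 - p) < K := by
    rw [Real.rpow_sub hr, Real.rpow_two, div_lt_iff₀' (by positivity)]
    exact h
  rw [one_div, Real.lt_rpow_inv_iff_of_pos hr.le ((Real.rpow_pos_of_pos hr _).le.trans hsub.le)
    (by linarith)]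
  exact hsub

theorem stmt_2_general (n : ℕ) (q K : ℝ) (hq1 : 1 ≤ q) (hqn : (n : ℝ) / 2 < q)
    (V : (Fin n → ℝ) → ℝ) (hV0 : ∀ x, 0 ≤ V x)
    (hVloc : ∀ (c : Fin n → ℝ) (l : ℝ), 0 < l → IntegrableOn V (cube n c l) volume)
    (hVq : ∀ (c : Fin n → ℝ) (l : ℝ), 0 < l →
      IntegrableOn (fun x => V x ^ q) (cube n c l) volume)
    (hRH : ∀ (c : Fin n → ℝ) (l : ℝ), 0 < l →
      (⨍ x in cube n c l, V x ^ q) ^ (1 / q) ≤ K * ⨍ x in cube n c l, V x)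
    (c c' : Fin n → ℝ) (l l' : ℝ) (hl : 0 < l) (hl' : 0 < l')
    (hsub : cube n c' l' ⊆ cube n c l)
    (hsmall : l ^ 2 * ⨍ x in cube n c l, V x ≤ 1)
    (hbig : 1 < l' ^ 2 * ⨍ x in cube n c' l', V x) :
    l < K ^ (1 / (2 - (n : ℝ) / q)) * l' := by
  set A := ⨍ x in cube n c l, V x
  set A' := ⨍ x in cube n c' l', V x
  have hcomparison : A' ≤ (l / l') ^ ((n : ℝ) / q) * (K * A) :=
    (setAverage_cube_le_rpow_mul_setAverage_rpow hq1 hl hl' hsub hV0 (hVloc c' l' hl')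
      (hVq c l hl)).trans (by gcongr; exact hRH c l hl)
  have hA : 0 ≤ A := setAverage_nonneg_of_ae (ae_of_all _ hV0)
  refine (div_lt_iff₀ hl').mp (lt_rpow_one_div_of_sq_lt_rpow_mul (div_pos hl hl') ?_ ?_)
  · rw [div_lt_iff₀ (by linarith)]; linarith
  · have hstrict : l ^ 2 * A < (l' ^ 2 * ((l / l') ^ ((n : ℝ) / q) * K)) * A :=
      calc l ^ 2 * A ≤ 1 := hsmall
        _ < l' ^ 2 * A' := hbig
        _ ≤ l' ^ 2 * ((l / l') ^ ((n : ℝ) / q) * (K * A)) := by gcongr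
        _ = _ := by ring
    rw [div_pow, div_lt_iff₀ (by positivity), mul_comm]
    exact lt_of_mul_lt_mul_right hstrict hA

/-- Let `V ∈ B^q(ℝ^n)` be a reverse Hölder weight with exponent `q ≥ 1` and
constant `K = ⟦V⟧_q`. Suppose `Q, Q̃` are cubes with `Q̃ ⊆ Q`, `l(Q)² ⨍_Q V ≤ 1` and
`l(Q̃)² ⨍_{Q̃} V > 1`. If `q > n/2`, then `l(Q) < K^{1/(2 - n/q)} l(Q̃)`. -/
theorem stmt_2 (n : ℕ) (q K : ℝ) (hq1 : 1 ≤ q) (hqn : (n : ℝ) / 2 < q) (hK : 1 ≤ K)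
    (V : (Fin n → ℝ) → ℝ) (hV0 : ∀ x, 0 ≤ V x)
    (hVloc : ∀ (c : Fin n → ℝ) (l : ℝ), 0 < l → IntegrableOn V (cube n c l) volume)
    (hVq : ∀ (c : Fin n → ℝ) (l : ℝ), 0 < l →
      IntegrableOn (fun x => V x ^ q) (cube n c l) volume)
    (hRH : ∀ (c : Fin n → ℝ) (l : ℝ), 0 < l →
      (⨍ x in cube n c l, V x ^ q) ^ (1 / q) ≤ K * ⨍ x in cube n c l, V x)
    (c c' : Fin n → ℝ) (l l' : ℝ) (hl : 0 < l) (hl' : 0 < l')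
    (hsub : cube n c' l' ⊆ cube n c l)
    (hsmall : l ^ 2 * ⨍ x in cube n c l, V x ≤ 1)
    (hbig : 1 < l' ^ 2 * ⨍ x in cube n c' l', V x) :
    l < K ^ (1 / (2 - (n : ℝ) / q)) * l' :=
  stmt_2_general n q K hq1 hqn V hV0 hVloc hVq hRH c c' l l' hl hl' hsub hsmall hbig
end

section
/- Let H be a Hilbert space and let E_σ, E_τ ∈ L(H) be idempotents (projections) with ‖E_τ(E_τ − E_σ)‖ < 1 and ‖E_σ(E_σ − E_τ)‖ < 1. Then the restriction E_τ : E_σ H → E_τ H is a bijection, with right inverse E_σ (I − E_τ(E_τ − E_σ))^{-1} and left inverse (I − E_σ(E_σ − E_τ))^{-1} E_σ. -/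
/-- Let `E_σ, E_τ` be bounded idempotents with `‖E_τ(E_τ-E_σ)‖ < 1` and
`‖E_σ(E_σ-E_τ)‖ < 1`. Then `E_τ : E_σH → E_τH` is a bijection, with right inverse
`E_σ(I - E_τ(E_τ-E_σ))⁻¹` and left inverse `(I - E_σ(E_σ-E_τ))⁻¹E_σ`. -/
theorem stmt_9 {H : Type*} [NormedAddCommGroup H] [NormedSpace ℂ H] [CompleteSpace H]
    (Eσ Eτ : H →L[ℂ] H) (hσ : Eσ * Eσ = Eσ) (hτ : Eτ * Eτ = Eτ)
    (h1 : ‖Eτ * (Eτ - Eσ)‖ < 1) (h2 : ‖Eσ * (Eσ - Eτ)‖ < 1) :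
    (∀ y ∈ Set.range Eτ, ∃! x, x ∈ Set.range Eσ ∧ Eτ x = y) ∧
    (∀ y ∈ Set.range Eτ, Eτ (Eσ (Ring.inverse (1 - Eτ * (Eτ - Eσ)) y)) = y) ∧
    (∀ x ∈ Set.range Eσ, Ring.inverse (1 - Eσ * (Eσ - Eτ)) (Eσ (Eτ x)) = x) := by
  set A : H →L[ℂ] H := 1 - Eτ * (Eτ - Eσ) with hA
  set B : H →L[ℂ] H := 1 - Eσ * (Eσ - Eτ) with hB
  have hAu : IsUnit A := (Units.oneSub _ h1).isUnit
  have hBu : IsUnit B := (Units.oneSub _ h2).isUnit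
  -- key identities
  have key1 : Eτ * Eσ = Eτ * A := by
    have : Eτ * A = Eτ - Eτ * (Eτ * (Eτ - Eσ)) := by rw [hA]; noncomm_ring
    rw [this, ← mul_assoc, hτ, mul_sub, hτ]; noncomm_ring
  have key2 : Eσ * Eτ * Eσ = B * Eσ := by
    have : B * Eσ = Eσ - Eσ * (Eσ - Eτ) * Eσ := by rw [hB]; noncomm_ring
    rw [this]; simp only [mul_sub, sub_mul, hσ]; abel
  have right : ∀ y ∈ Set.range Eτ, Eτ (Eσ (Ring.inverse A y)) = y := by
    rintro y ⟨z, rfl⟩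
    have : Eτ * Eσ * Ring.inverse A = Eτ := by
      rw [key1, mul_assoc, Ring.mul_inverse_cancel A hAu, mul_one]
    calc Eτ (Eσ (Ring.inverse A (Eτ z))) = ((Eτ * Eσ * Ring.inverse A) * Eτ) z := rfl
    _ = (Eτ * Eτ) z := by rw [this]
    _ = Eτ z := by rw [hτ]
  have left : ∀ x ∈ Set.range Eσ, Ring.inverse B (Eσ (Eτ x)) = x := by
    rintro x ⟨z, rfl⟩
    have : Ring.inverse B * (Eσ * Eτ * Eσ) = Eσ := by
      rw [key2, ← mul_assoc, Ring.inverse_mul_cancel B hBu, one_mul]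
    calc Ring.inverse B (Eσ (Eτ (Eσ z))) = (Ring.inverse B * (Eσ * Eτ * Eσ)) z := rfl
    _ = Eσ z := by rw [this]
  refine ⟨?_, right, left⟩
  intro y hy
  refine ⟨Eσ (Ring.inverse A y), ⟨⟨_, rfl⟩, right y hy⟩, ?_⟩
  rintro x ⟨hx, rfl⟩
  set x' := Eσ (Ring.inverse A (Eτ x)) with hx'
  have hτx' : Eτ x' = Eτ x := right (Eτ x) ⟨x, rfl⟩
  calc x = Ring.inverse B (Eσ (Eτ x)) := (left x hx).symm
  _ = Ring.inverse B (Eσ (Eτ x')) := by rw [hτx']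
  _ = x' := left x' ⟨_, rfl⟩
end
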